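/- Let D be a triangulated category with a t-structure 𝒰 = (U^{≤0}, U^{≥0}) with heart ℋ = U^{≤0} ∩ U^{≥0}, let m be a positive integer, and let S be a triangulated full subcategory of D such that ℋ ⊆ S and (S ∩ U^{≤0}, S ∩ U^{≥0}) is a t-structure on S. Let (X^{≤0}, X^{≥0}) be a t-structure on D with U^{≤-m} ⊆ X^{≤0} ⊆ U^{≤0}. Then (S ∩ U^{≤-m}) * (X^{≤0} ∩ U^{≥-(m-1)}) = S ∩ X^{≤0} and (X^{≥1} ∩ U^{≤0})[1] * (S ∩ U^{≥0}) = S ∩ X^{≥0}. -/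

import Mathlib

open CategoryTheory Category Limits Pretriangulated

universe v u

variable (D : Type u) [Category.{v} D] [Preadditive D] [HasZeroObject D]
  [HasShift D ℤ] [∀ n : ℤ, (shiftFunctor D n).Additive]
  [Pretriangulated D] [HasBinaryBiproducts D]

/-- `shiftSet D S n` is the full subcategory `S[n]`: objects isomorphic to `X⟦n⟧`
with `X ∈ S`. -/
def shiftSet (S : Set D) (n : ℤ) : Set D :=
  {A | ∃ B ∈ S, Nonempty (A ≅ B⟦n⟧)}

/-- `starSet D X Y` is `X * Y`: the class of objects `A` admitting a distinguished
triangle `X → A → Y → X[1]` with `X ∈ 𝒳` and `Y ∈ 𝒴`. -/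
def starSet (X Y : Set D) : Set D :=
  {A | ∃ (B C : D) (f : B ⟶ A) (g : A ⟶ C) (h : C ⟶ B⟦(1 : ℤ)⟧),
    B ∈ X ∧ C ∈ Y ∧ Triangle.mk f g h ∈ distTriang D}

/-- `Hom(X, Y) = 0`: every morphism from an object of `X` to an object of `Y` is zero. -/
def homZero (X Y : Set D) : Prop :=
  ∀ A ∈ X, ∀ B ∈ Y, ∀ f : A ⟶ B, f = 0

/-- a class of objects closed under isomorphisms -/
def isoClosed (S : Set D) : Prop :=
  ∀ ⦃A B : D⦄, (A ≅ B) → A ∈ S → B ∈ S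

/-- an additive full subcategory (closed under isomorphisms) which is closed under
direct summands -/
structure AdditiveClosed (S : Set D) : Prop where
  iso : isoClosed D S
  zero : ∀ Z : D, IsZero Z → Z ∈ S
  sum : ∀ A ∈ S, ∀ B ∈ S, (A ⊞ B) ∈ S
  summand : ∀ A ∈ S, ∀ (X : D) (i : X ⟶ A) (p : A ⟶ X), i ≫ p = 𝟙 X → X ∈ S

/-- a torsion pair `(U, V)` in the triangulated category `D` -/
structure IsTorsionPair (U V : Set D) : Prop where
  addU : AdditiveClosed D U
  addV : AdditiveClosed D V
  hom_zero : homZero D U V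
  cover : ∀ A : D, A ∈ starSet D U V

/-- `t₁ ≼ t₂` for torsion pairs in a triangulated category: `U₁ ⊆ U₂` and `U₁[1] ⊆ U₂`. -/
def torsLE (U₁ U₂ : Set D) : Prop :=
  U₁ ⊆ U₂ ∧ shiftSet D U₁ 1 ⊆ U₂

/-- a torsion pair `(T, F)` in an (extension-closed) full subcategory `H` of `D`:
`T` and `F` are additive subcategories of `H` closed under direct summands,
`Hom(T, F) = 0`, and every object of `H` admits a distinguished triangle
`T → X → F → T[1]` with `T ∈ 𝒯`, `F ∈ ℱ`. -/
structure IsTorsionPairIn (H T F : Set D) : Prop where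
  subT : T ⊆ H
  subF : F ⊆ H
  isoT : ∀ ⦃A B : D⦄, (A ≅ B) → A ∈ T → B ∈ H → B ∈ T
  isoF : ∀ ⦃A B : D⦄, (A ≅ B) → A ∈ F → B ∈ H → B ∈ F
  zeroT : ∀ Z : D, IsZero Z → Z ∈ H → Z ∈ T
  zeroF : ∀ Z : D, IsZero Z → Z ∈ H → Z ∈ F
  sumT : ∀ A ∈ T, ∀ B ∈ T, (A ⊞ B) ∈ T
  sumF : ∀ A ∈ F, ∀ B ∈ F, (A ⊞ B) ∈ F
  summandT : ∀ A ∈ T, ∀ (X : D) (i : X ⟶ A) (p : A ⟶ X), i ≫ p = 𝟙 X → X ∈ H → X ∈ T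
  summandF : ∀ A ∈ F, ∀ (X : D) (i : X ⟶ A) (p : A ⟶ X), i ≫ p = 𝟙 X → X ∈ H → X ∈ F
  hom_zero : homZero D T F
  cover : ∀ A ∈ H, A ∈ starSet D T F

/-- an `s`-torsion pair in `H`: a torsion pair with moreover `Hom(T, F[-1]) = 0`. -/
structure IsSTorsionPairIn (H T F : Set D) extends IsTorsionPairIn D H T F : Prop where
  neg_hom_zero : ∀ A ∈ T, ∀ B ∈ F, ∀ f : A ⟶ B⟦(-1 : ℤ)⟧, f = 0

/-- the relation `≼` for torsion pairs in a subcategory `H`: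
`Hom(T, F') = 0` and `Hom(T, F'[-1]) = 0`. -/
def torsLEIn (T F' : Set D) : Prop :=
  homZero D T F' ∧ homZero D T (shiftSet D F' (-1))

/-- a `t`-structure `(L, G) = (S^{≤0}, S^{≥0})` on a triangulated (full) subcategory `S`
of `D` (take `S = Set.univ` for a `t`-structure on `D` itself). -/
structure IsTStructureOn (S L G : Set D) : Prop where
  subL : L ⊆ S
  subG : G ⊆ S
  isoL : ∀ ⦃A B : D⦄, (A ≅ B) → A ∈ L → B ∈ S → B ∈ L
  isoG : ∀ ⦃A B : D⦄, (A ≅ B) → A ∈ G → B ∈ S → B ∈ G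
  hom_zero : homZero D L (shiftSet D G (-1))
  cover : ∀ A ∈ S, A ∈ starSet D L (shiftSet D G (-1))
  shiftL : L ⊆ shiftSet D L (-1)
  shiftG : shiftSet D G (-1) ⊆ G

/-- a `t`-structure `(L, G) = (D^{≤0}, D^{≥0})` on `D`. -/
def IsTStructure (L G : Set D) : Prop := IsTStructureOn D Set.univ L G

/-- a triangulated full subcategory of `D`. -/
structure IsTriangulatedSub (S : Set D) : Prop where
  iso : isoClosed D S
  zero : ∀ Z : D, IsZero Z → Z ∈ S
  shift : ∀ (n : ℤ), ∀ A ∈ S, A⟦n⟧ ∈ S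
  ext₂ : ∀ (T : Triangle D), (T ∈ distTriang D) → T.obj₁ ∈ S → T.obj₃ ∈ S → T.obj₂ ∈ S

/-- an `m`-extended heart on `D`: a full subcategory of the form
`V^{≥ -(m-1)} ∩ V^{≤ 0}` for some `t`-structure `(V^{≤0}, V^{≥0})` on `D`. -/
def IsExtendedHeart (m : ℤ) (E : Set D) : Prop :=
  ∃ L G : Set D, IsTStructure D L G ∧ E = shiftSet D G (m - 1) ∩ L

/-- the relation `E₁ ≤ E₂` for `m`-extended hearts:
`E₁ ⊆ E₂[m] * E₂` and `E₂ ⊆ E₁ * E₁[-m]`. -/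
def extHeartLE (m : ℤ) (E₁ E₂ : Set D) : Prop :=
  E₁ ⊆ starSet D (shiftSet D E₂ m) E₂ ∧ E₂ ⊆ starSet D E₁ (shiftSet D E₁ (-m))


/-!
Here `shiftSet C L n = U^{≤-n}` and `shiftSet C G n = U^{≥-n}`.

Objects of `U^{≤0} ∩ U^{≥-k}`, `k ≥ 0`, lie in `S`: truncating with respect to `U^{≤-1}`
exhibits such an object as an extension of an object of the heart by the shift of an object of
`U^{≤0} ∩ U^{≥-(k-1)}`. By orthogonality, `U^{≤-m} ⊆ X^{≤0} ⊆ U^{≤0}` turns into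
`U^{≥0} ⊆ X^{≥0} ⊆ U^{≥-m}`.

For `E ∈ S ∩ X^{≤0}`, the `U^{≤-m}`-truncation `A → E → B` has `B ∈ X^{≤0} ∩ U^{≥-(m-1)}`,
so `B`, and then `A`, lie in `S`. For `E ∈ S ∩ X^{≥0}`, truncate `E[-1]` by the t-structure
on `S`: its `U^{≤0}`-part lies in `X^{≥1}`, because a map into it from `X^{≤0}` dies in `E[-1]`
and so factors through an object of `U^{≥2}`. The reverse inclusions hold by extension closure.
-/
section ShiftSet

variable {C : Type*} [Category C]

lemma isoClosed.inter {S T : Set C} (hS : isoClosed C S) (hT : isoClosed C T) :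
    isoClosed C (S ∩ T) :=
  fun _ _ e h => ⟨hS e h.1, hT e h.2⟩

variable [HasShift C ℤ]

lemma shift_mem_shiftSet {S : Set C} (n : ℤ) {A : C} (hA : A ∈ S) :
    A⟦n⟧ ∈ shiftSet C S n :=
  ⟨A, hA, ⟨Iso.refl _⟩⟩

lemma isoClosed_shiftSet (S : Set C) (n : ℤ) : isoClosed C (shiftSet C S n) := by
  rintro A B e ⟨P, hP, ⟨e'⟩⟩
  exact ⟨P, hP, ⟨e.symm ≪≫ e'⟩⟩

lemma shiftSet_mono {S T : Set C} (h : S ⊆ T) (n : ℤ) : shiftSet C S n ⊆ shiftSet C T n :=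
  fun _ ⟨P, hP, he⟩ => ⟨P, h hP, he⟩

lemma shiftSet_shiftSet (S : Set C) (a b : ℤ) :
    shiftSet C (shiftSet C S a) b = shiftSet C S (a + b) := by
  ext A
  constructor
  · rintro ⟨P, ⟨B, hB, ⟨e⟩⟩, ⟨e'⟩⟩
    exact ⟨B, hB,
      ⟨e' ≪≫ (shiftFunctor C b).mapIso e ≪≫ ((shiftFunctorAdd C a b).app B).symm⟩⟩
  · rintro ⟨B, hB, ⟨e⟩⟩
    exact ⟨B⟦a⟧, shift_mem_shiftSet a hB, ⟨e ≪≫ (shiftFunctorAdd C a b).app B⟩⟩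

lemma mem_shiftSet_iff {S : Set C} (hS : isoClosed C S) {n : ℤ} {A : C} :
    A ∈ shiftSet C S n ↔ A⟦-n⟧ ∈ S := by
  constructor
  · rintro ⟨B, hB, ⟨e⟩⟩
    exact hS ((shiftShiftNeg B n).symm ≪≫ ((shiftFunctor C (-n)).mapIso e).symm) hB
  · exact fun h => ⟨A⟦-n⟧, h, ⟨(shiftNegShift A n).symm⟩⟩

lemma shiftSet_zero {S : Set C} (hS : isoClosed C S) : shiftSet C S 0 = S := by
  ext A
  rw [mem_shiftSet_iff hS, neg_zero]
  exact ⟨hS ((shiftFunctorZero C ℤ).app A), hS ((shiftFunctorZero C ℤ).app A).symm⟩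

lemma shiftSet_shiftSet_of_add_eq_zero {S : Set C} (hS : isoClosed C S) {a b : ℤ}
    (h : a + b = 0) : shiftSet C (shiftSet C S a) b = S := by
  rw [shiftSet_shiftSet, h, shiftSet_zero hS]

lemma homZero_shiftSet [Preadditive C] {X Y : Set C} (h : homZero C X Y) (n : ℤ) :
    homZero C (shiftSet C X n) (shiftSet C Y n) := by
  rintro A ⟨P, hP, ⟨e⟩⟩ B ⟨Q, hQ, ⟨e'⟩⟩ f
  have hf : e.inv ≫ f ≫ e'.hom = 0 := by
    rw [← (shiftFunctor C n).map_preimage (e.inv ≫ f ≫ e'.hom),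
      h P hP Q hQ ((shiftFunctor C n).preimage _), Functor.map_zero]
  simpa using e.hom ≫= hf =≫ e'.inv

end ShiftSet

section Pretriangulated

variable {C : Type*} [Category C] [Preadditive C] [HasZeroObject C] [HasShift C ℤ]
  [∀ n : ℤ, (shiftFunctor C n).Additive] [Pretriangulated C]

lemma isoClosed_starSet (X Y : Set C) : isoClosed C (starSet C X Y) := by
  rintro A A' e ⟨B, B', u, v, w, hB, hB', hd⟩
  refine ⟨B, B', u ≫ e.hom, e.inv ≫ v, w, hB, hB', isomorphic_distinguished _ hd _ ?_⟩
  exact Triangle.isoMk _ _ (Iso.refl _) e.symm (Iso.refl _) (by simp [Triangle.mk])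
    (by simp [Triangle.mk]) (by simp [Triangle.mk])

lemma starSet_mono {X X' Y Y' : Set C} (hX : X ⊆ X') (hY : Y ⊆ Y') :
    starSet C X Y ⊆ starSet C X' Y' :=
  fun _ ⟨B, B', u, v, w, hB, hB', hd⟩ => ⟨B, B', u, v, w, hX hB, hY hB', hd⟩

lemma shift_mem_starSet {X Y : Set C} {A : C} (hA : A ∈ starSet C X Y) (n : ℤ) :
    A⟦n⟧ ∈ starSet C (shiftSet C X n) (shiftSet C Y n) := by
  obtain ⟨B, B', u, v, w, hB, hB', hd⟩ := hA
  exact ⟨B⟦n⟧, B'⟦n⟧, _, _, _, shift_mem_shiftSet n hB, shift_mem_shiftSet n hB',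
    Triangle.shift_distinguished _ hd n⟩

lemma mem_starSet_shiftSet_of_shift_mem {X Y : Set C} {A : C} {n : ℤ}
    (h : A⟦-n⟧ ∈ starSet C X Y) : A ∈ starSet C (shiftSet C X n) (shiftSet C Y n) :=
  isoClosed_starSet _ _ (shiftNegShift A n) (shift_mem_starSet h n)

namespace IsTStructure

variable {L G : Set C}

lemma isoClosed_aisle (hT : IsTStructure C L G) : isoClosed C L :=
  fun _ _ e hA => hT.isoL e hA trivial

lemma isoClosed_coaisle (hT : IsTStructure C L G) : isoClosed C G :=
  fun _ _ e hA => hT.isoG e hA trivial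

lemma shift_one_mem_aisle (hT : IsTStructure C L G) {A : C} (hA : A ∈ L) :
    A⟦(1 : ℤ)⟧ ∈ L := by
  simpa using (mem_shiftSet_iff hT.isoClosed_aisle).1 (hT.shiftL hA)

lemma mem_coaisle_of_homZero (hT : IsTStructure C L G) {B : C}
    (hB : ∀ A ∈ L, ∀ f : A ⟶ B, f = 0) : B ∈ shiftSet C G (-1) := by
  obtain ⟨P, Q, u, v, w, hP, hQ, hd⟩ := hT.cover B trivial
  obtain ⟨s, hs⟩ : ∃ s : P⟦(1 : ℤ)⟧ ⟶ Q, 𝟙 _ = s ≫ w :=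
    Triangle.coyoneda_exact₁ _ hd _ <| (id_comp _).trans <|
      ((shiftFunctor C 1).congr_map (hB P hP u)).trans (Functor.map_zero _ _ _)
  have hP₁ : IsZero (P⟦(1 : ℤ)⟧) := by
    rw [IsZero.iff_id_eq_zero, hs, hT.hom_zero _ (hT.shift_one_mem_aisle hP) _ hQ s, zero_comp]
  have : IsIso v := (Triangle.isZero₃_iff_isIso₁ _ (rot_of_distTriang _ hd)).1 hP₁
  exact isoClosed_shiftSet G (-1) (asIso v).symm hQ

lemma mem_aisle_of_homZero (hT : IsTStructure C L G) {A : C}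
    (hA : ∀ B ∈ shiftSet C G (-1), ∀ f : A ⟶ B, f = 0) : A ∈ L := by
  obtain ⟨P, Q, u, v, w, hP, hQ, hd⟩ := hT.cover A trivial
  obtain ⟨s, hs⟩ : ∃ s : P⟦(1 : ℤ)⟧ ⟶ Q, 𝟙 _ = w ≫ s :=
    Triangle.yoneda_exact₃ _ hd _ ((comp_id _).trans (hA Q hQ v))
  have hQ₀ : IsZero Q := by
    rw [IsZero.iff_id_eq_zero, hs, hT.hom_zero _ (hT.shift_one_mem_aisle hP) _ hQ s, comp_zero]
  have : IsIso u := (Triangle.isZero₃_iff_isIso₁ _ hd).1 hQ₀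
  exact hT.isoClosed_aisle (asIso u) hP

lemma mem_coaisle_of_shift_mem (hT : IsTStructure C L G) {B : C}
    (h : B⟦(-1 : ℤ)⟧ ∈ shiftSet C G (-1)) : B ∈ G := by
  rw [mem_shiftSet_iff hT.isoClosed_coaisle, neg_neg] at h
  exact hT.isoClosed_coaisle (shiftNegShift B 1) h

lemma mem_aisle_of_distTriang (hT : IsTStructure C L G) {T : Triangle C}
    (hd : T ∈ distTriang C) (h₁ : T.obj₁ ∈ L) (h₃ : T.obj₃ ∈ L) : T.obj₂ ∈ L := by
  refine hT.mem_aisle_of_homZero fun B hB φ => ?_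
  obtain ⟨ψ, hψ⟩ := Triangle.yoneda_exact₂ T hd φ (hT.hom_zero _ h₁ _ hB _)
  rw [hψ, hT.hom_zero _ h₃ _ hB ψ, comp_zero]

lemma mem_coaisle_of_distTriang (hT : IsTStructure C L G) {T : Triangle C}
    (hd : T ∈ distTriang C) (h₁ : T.obj₁ ∈ G) (h₃ : T.obj₃ ∈ G) : T.obj₂ ∈ G := by
  refine hT.mem_coaisle_of_shift_mem (hT.mem_coaisle_of_homZero fun A hA φ => ?_)
  have hd' := Triangle.shift_distinguished T hd (-1)
  obtain ⟨ψ, hψ⟩ := Triangle.coyoneda_exact₂ _ hd' φ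
    (hT.hom_zero _ hA _ (shift_mem_shiftSet (-1) h₃) _)
  rw [hψ, hT.hom_zero _ hA _ (shift_mem_shiftSet (-1) h₁) ψ]
  exact zero_comp

lemma shift (hT : IsTStructure C L G) (n : ℤ) :
    IsTStructure C (shiftSet C L n) (shiftSet C G n) := by
  have hG : shiftSet C (shiftSet C G n) (-1) = shiftSet C (shiftSet C G (-1)) n := by
    rw [shiftSet_shiftSet, shiftSet_shiftSet, add_comm]
  have hL : shiftSet C (shiftSet C L n) (-1) = shiftSet C (shiftSet C L (-1)) n := by
    rw [shiftSet_shiftSet, shiftSet_shiftSet, add_comm]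
  refine ⟨Set.subset_univ _, Set.subset_univ _, fun _ _ e hA _ => isoClosed_shiftSet _ _ e hA,
    fun _ _ e hA _ => isoClosed_shiftSet _ _ e hA, ?_, fun A _ => ?_, ?_, ?_⟩
  · rw [hG]
    exact homZero_shiftSet hT.hom_zero n
  · rw [hG]
    exact mem_starSet_shiftSet_of_shift_mem (hT.cover _ trivial)
  · rw [hL]
    exact shiftSet_mono hT.shiftL n
  · rw [hG]
    exact shiftSet_mono hT.shiftG n

lemma shiftSet_aisle_antitone (hT : IsTStructure C L G) {a b : ℤ} (h : a ≤ b) :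
    shiftSet C L b ⊆ shiftSet C L a := by
  induction b, h using Int.leInduction with
  | base => rfl
  | succ b _ ih =>
    refine (shiftSet_mono hT.shiftL (b + 1)).trans ?_
    rwa [shiftSet_shiftSet, show -1 + (b + 1) = b by ring]

lemma shiftSet_coaisle_monotone (hT : IsTStructure C L G) {a b : ℤ} (h : a ≤ b) :
    shiftSet C G a ⊆ shiftSet C G b := by
  induction b, h using Int.leInduction with
  | base => rfl
  | succ b _ ih =>
    refine ih.trans ?_
    have := shiftSet_mono hT.shiftG (b + 1)
    rwa [shiftSet_shiftSet, show -1 + (b + 1) = b by ring] at this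

lemma coaisle_subset_of_aisle_subset {L' G' : Set C} (hT : IsTStructure C L G)
    (hT' : IsTStructure C L' G') (h : L' ⊆ L) : G ⊆ G' := fun _ hB =>
  hT'.mem_coaisle_of_shift_mem <| hT'.mem_coaisle_of_homZero fun _ hA f =>
    hT.hom_zero _ (h hA) _ (shift_mem_shiftSet (-1) hB) f

end IsTStructure

variable {L G S X₁ X₂ : Set C} {m : ℤ}

lemma IsTStructure.aisle_inter_shiftSet_coaisle_subset (hU : IsTStructure C L G)
    (hS : IsTriangulatedSub C S) (hHS : L ∩ G ⊆ S) {k : ℤ} (hk : 0 ≤ k) :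
    L ∩ shiftSet C G k ⊆ S := by
  induction k, hk using Int.leInduction with
  | base => rwa [shiftSet_zero hU.isoClosed_coaisle]
  | succ k hk ih =>
    rintro A ⟨hAL, hAG⟩
    obtain ⟨P, Q, u, v, w, hP, hQ, hd⟩ := (hU.shift 1).cover A trivial
    rw [shiftSet_shiftSet_of_add_eq_zero hU.isoClosed_coaisle (by norm_num)] at hQ
    have hPL : P⟦(1 : ℤ)⟧ ∈ L := hU.shift_one_mem_aisle <|
      (shiftSet_zero hU.isoClosed_aisle).subset (hU.shiftSet_aisle_antitone zero_le_one hP)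
    have hQS : Q ∈ S :=
      hHS ⟨hU.mem_aisle_of_distTriang (rot_of_distTriang _ hd) hAL hPL, hQ⟩
    have hPG : P ∈ shiftSet C G (k + 1) :=
      (hU.shift (k + 1)).mem_coaisle_of_distTriang (inv_rot_of_distTriang _ hd)
        (hU.shiftSet_coaisle_monotone (by omega) (shift_mem_shiftSet (-1) hQ)) hAG
    rw [← shiftSet_shiftSet, mem_shiftSet_iff (isoClosed_shiftSet _ _)] at hPG
    have hPS : P⟦(-1 : ℤ)⟧ ∈ S :=
      ih ⟨(mem_shiftSet_iff hU.isoClosed_aisle).1 hP, hPG⟩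
    exact hS.ext₂ _ hd (hS.iso (shiftNegShift P 1) (hS.shift 1 _ hPS)) hQS

lemma starSet_eq_inter_aisle (hU : IsTStructure C L G) (hm : 1 ≤ m)
    (hS : IsTriangulatedSub C S) (hHS : L ∩ G ⊆ S) (hX : IsTStructure C X₁ X₂)
    (h1 : shiftSet C L m ⊆ X₁) (h2 : X₁ ⊆ L) :
    starSet C (S ∩ shiftSet C L m) (X₁ ∩ shiftSet C G (m - 1)) = S ∩ X₁ := by
  have hbdd := hU.aisle_inter_shiftSet_coaisle_subset hS hHS (k := m - 1) (by omega)
  apply Set.Subset.antisymm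
  · rintro E ⟨A, B, u, v, w, ⟨hAS, hAL⟩, ⟨hBX, hBG⟩, hd⟩
    exact ⟨hS.ext₂ _ hd hAS (hbdd ⟨h2 hBX, hBG⟩), hX.mem_aisle_of_distTriang hd (h1 hAL) hBX⟩
  · rintro E ⟨hES, hEX⟩
    obtain ⟨A, B, u, v, w, hA, hB, hd⟩ := (hU.shift m).cover E trivial
    rw [shiftSet_shiftSet, ← sub_eq_add_neg] at hB
    have hBX : B ∈ X₁ := hX.mem_aisle_of_distTriang (rot_of_distTriang _ hd) hEX
      (h1 ((hU.shift m).shift_one_mem_aisle hA))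
    have hBS : B ∈ S := hbdd ⟨h2 hBX, hB⟩
    have hAS : A ∈ S := hS.ext₂ _ (inv_rot_of_distTriang _ hd) (hS.shift (-1) _ hBS) hES
    exact ⟨A, B, u, v, w, ⟨hAS, hA⟩, ⟨hBX, hB⟩, hd⟩

lemma starSet_eq_inter_coaisle (hU : IsTStructure C L G) (hm : 1 ≤ m)
    (hS : IsTriangulatedSub C S) (hHS : L ∩ G ⊆ S)
    (hUS : IsTStructureOn C S (S ∩ L) (S ∩ G)) (hX : IsTStructure C X₁ X₂)
    (h1 : shiftSet C L m ⊆ X₁) (h2 : X₁ ⊆ L) :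
    starSet C (shiftSet C (shiftSet C X₂ (-1) ∩ L) 1) (S ∩ G) = S ∩ X₂ := by
  have hbdd := hU.aisle_inter_shiftSet_coaisle_subset hS hHS (k := m - 1) (by omega)
  have hX₂G : shiftSet C X₂ (-1) ⊆ shiftSet C G (m - 1) := by
    have := shiftSet_mono (hX.coaisle_subset_of_aisle_subset (hU.shift m) h1) (-1)
    rwa [shiftSet_shiftSet, ← sub_eq_add_neg] at this
  have hGX₂ : G ⊆ X₂ := hU.coaisle_subset_of_aisle_subset hX h2
  apply Set.Subset.antisymm
  · rintro E ⟨A, B, u, v, w, ⟨R, ⟨hRX, hRL⟩, ⟨e⟩⟩, ⟨hBS, hBG⟩, hd⟩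
    have hAS : A ∈ S := hS.iso e.symm (hS.shift 1 R (hbdd ⟨hRL, hX₂G hRX⟩))
    have hAX : A ∈ X₂ := by
      rw [← shiftSet_shiftSet_of_add_eq_zero hX.isoClosed_coaisle
        (show (-1 : ℤ) + 1 = 0 by rfl)]
      exact ⟨R, hRX, ⟨e⟩⟩
    exact ⟨hS.ext₂ _ hd hAS hBS, hX.mem_coaisle_of_distTriang hd hAX (hGX₂ hBG)⟩
  · rintro E ⟨hES, hEX⟩
    obtain ⟨P, Q, u, v, w, ⟨-, hPL⟩, hQ, hd⟩ :=
      hUS.cover (E⟦(-1 : ℤ)⟧) (hS.shift (-1) E hES)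
    have hQG : Q⟦(-1 : ℤ)⟧ ∈ shiftSet C G (-1) :=
      shift_mem_shiftSet (-1) (hU.shiftG (shiftSet_mono Set.inter_subset_right (-1) hQ))
    have hPX : P ∈ shiftSet C X₂ (-1) := hX.mem_coaisle_of_homZero fun W hW ψ => by
      obtain ⟨χ, hχ⟩ := Triangle.coyoneda_exact₂ _ (inv_rot_of_distTriang _ hd) ψ
        (hX.hom_zero _ hW _ (shift_mem_shiftSet (-1) hEX) _)
      rw [hχ, hU.hom_zero _ (h2 hW) _ hQG χ]
      exact zero_comp
    have hE :
        E⟦(-1 : ℤ)⟧ ∈ starSet C (shiftSet C X₂ (-1) ∩ L) (shiftSet C (S ∩ G) (-1)) :=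
      ⟨P, Q, u, v, w, ⟨hPX, hPL⟩, hQ, hd⟩
    refine starSet_mono subset_rfl (fun Z hZ => ?_) (mem_starSet_shiftSet_of_shift_mem hE)
    rwa [shiftSet_shiftSet_of_add_eq_zero (hS.iso.inter hU.isoClosed_coaisle)
      (show (-1 : ℤ) + 1 = 0 by rfl)] at hZ

end Pretriangulated

/-- Lemma 5.2: let `S` be a triangulated full subcategory of `D`
containing the heart `ℋ = U^{≤0} ∩ U^{≥0}` such that `(S ∩ U^{≤0}, S ∩ U^{≥0})` is a
`t`-structure on `S`, and let `(X^{≤0}, X^{≥0})` be a `t`-structure on `D` with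
`U^{≤-m} ⊆ X^{≤0} ⊆ U^{≤0}`. Then
`(S ∩ U^{≤-m}) * (X^{≤0} ∩ U^{≥-(m-1)}) = S ∩ X^{≤0}` and
`(X^{≥1} ∩ U^{≤0})[1] * (S ∩ U^{≥0}) = S ∩ X^{≥0}`. -/
theorem stmt18 (L G : Set D) (hU : IsTStructure D L G) (m : ℤ) (hm : 1 ≤ m)
    (S : Set D) (hS : IsTriangulatedSub D S) (hHS : L ∩ G ⊆ S)
    (hUS : IsTStructureOn D S (S ∩ L) (S ∩ G))
    (X₁ X₂ : Set D) (hX : IsTStructure D X₁ X₂)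
    (h1 : shiftSet D L m ⊆ X₁) (h2 : X₁ ⊆ L) :
    starSet D (S ∩ shiftSet D L m) (X₁ ∩ shiftSet D G (m - 1)) = S ∩ X₁ ∧
    starSet D (shiftSet D (shiftSet D X₂ (-1) ∩ L) 1) (S ∩ G) = S ∩ X₂ :=
  ⟨starSet_eq_inter_aisle hU hm hS hHS hX h1 h2,
    starSet_eq_inter_coaisle hU hm hS hHS hUS hX h1 h2⟩
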